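/- arXiv:2204.10775 — 5 statements merged into one kernel-verified Lean document; each statement's English description precedes it below -/
import Mathlib

section
/- Let V be a finite vertex set. Two tournaments T1 and T2 on V satisfy g_{T1} = g_{T2} if and only if T1 and T2 are switching equivalent; moreover every oriented two-graph on V equals g_T for some tournament T on V. Consequently the map sending the switching class of T to g_T is a bijection between switching classes of tournaments on V and oriented two-graphs on V. -/
/-! If two tournaments have the same `gT`, switching the first with respect to the vertices `y`
at which the edges between a fixed vertex `v` and `y` disagree makes the rows at `v` agree, and a
tournament is determined by its `gT` and one row, since `e x y = -gT e v x y · e v x · e v y`.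
Conversely, an oriented two-graph `g` comes from the tournament in which `v` is a source and
`x → y` iff `g x v y = 1`: both sides being alternating, it suffices to compare them on triangles
of distinct vertices, and on triangles avoiding `v` the identity is the four-point condition. -/

def IsTournament {V : Type*} (e : V → V → ℤ) : Prop :=
  (∀ x y : V, e y x = - e x y) ∧ ∀ x y : V, x ≠ y → e x y = 1 ∨ e x y = -1

def gT {V : Type*} (e : V → V → ℤ) : V → V → V → ℤ :=
  fun x y z => e x y * e y z * e z x

def IsOrientedTwoGraph {V : Type*} (g : V → V → V → ℤ) : Prop :=
  (∀ x y z : V, g y x z = - g x y z) ∧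
  (∀ x y z : V, g x z y = - g x y z) ∧
  (∀ x y z : V, x ≠ y → y ≠ z → x ≠ z → g x y z = 1 ∨ g x y z = -1) ∧
  (∀ x y z w : V, x ≠ y → x ≠ z → x ≠ w → y ≠ z → y ≠ w → z ≠ w →
    g x y z * g y x w * g z y w * g x z w = 1)

open scoped Classical in
/-- The tournament `T` switched with respect to `X`: all edges between `X` and its
complement are reversed. -/
noncomputable def switchT {V : Type*} (e : V → V → ℤ) (X : Set V) : V → V → ℤ :=
  fun x y => if x ∈ X ↔ y ∈ X then e x y else - e x y

/-- Two tournaments are switching equivalent if one is obtained from the other by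
switching with respect to some subset of the vertices. -/
def SwitchEquiv {V : Type*} (e₁ e₂ : V → V → ℤ) : Prop :=
  ∃ X : Set V, e₂ = switchT e₁ X

def IsAlternatingTernary {V : Type*} (f : V → V → V → ℤ) : Prop :=
  (∀ x y z : V, f y x z = - f x y z) ∧ ∀ x y z : V, f x z y = - f x y z

namespace IsAlternatingTernary

variable {V : Type*} {f f' : V → V → V → ℤ}

theorem rotate (hf : IsAlternatingTernary f) (x y z : V) : f y z x = f x y z := by
  rw [hf.2 y x z, hf.1 x y z, neg_neg]

theorem apply_left_eq (hf : IsAlternatingTernary f) (x z : V) : f x x z = 0 := by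
  have := hf.1 x x z; omega

theorem apply_right_eq (hf : IsAlternatingTernary f) (x y : V) : f x y y = 0 := by
  have := hf.2 x y y; omega

theorem apply_outer_eq (hf : IsAlternatingTernary f) (x y : V) : f x y x = 0 := by
  rw [hf.2, hf.apply_left_eq, neg_zero]

theorem ext_of_distinct (hf : IsAlternatingTernary f) (hf' : IsAlternatingTernary f')
    (h : ∀ x y z : V, x ≠ y → y ≠ z → x ≠ z → f x y z = f' x y z) : f = f' := by
  funext x y z
  by_cases hxy : x = y
  · subst hxy; rw [hf.apply_left_eq, hf'.apply_left_eq]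
  by_cases hyz : y = z
  · subst hyz; rw [hf.apply_right_eq, hf'.apply_right_eq]
  by_cases hxz : x = z
  · subst hxz; rw [hf.apply_outer_eq, hf'.apply_outer_eq]
  exact h x y z hxy hyz hxz

end IsAlternatingTernary

namespace IsTournament

variable {V : Type*} {e e₁ e₂ : V → V → ℤ}

theorem apply_self (he : IsTournament e) (x : V) : e x x = 0 := by
  have := he.1 x x; omega

theorem mul_self_of_ne (he : IsTournament e) {x y : V} (hxy : x ≠ y) : e x y * e x y = 1 := by
  rcases he.2 x y hxy with h | h <;> simp [h]

theorem isAlternatingTernary_gT (he : IsTournament e) : IsAlternatingTernary (gT e) := by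
  refine ⟨fun x y z => ?_, fun x y z => ?_⟩
  · simp only [gT, he.1 x y, he.1 z x, he.1 y z]; ring
  · simp only [gT, he.1 y z, he.1 x y, he.1 z x]; ring

theorem apply_eq_neg_gT_mul (he : IsTournament e) {v x y : V} (hx : x ≠ v) (hy : y ≠ v) :
    e x y = -(gT e v x y * e v x * e v y) := by
  have hvx := he.mul_self_of_ne hx.symm
  have hvy := he.mul_self_of_ne hy.symm
  rw [gT, he.1 v y]
  linear_combination (-e x y) * hvx - e x y * e v x * e v x * hvy

theorem eq_of_gT_eq_of_row_eq (h₁ : IsTournament e₁) (h₂ : IsTournament e₂)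
    (hg : gT e₁ = gT e₂) (v : V) (hv : e₁ v = e₂ v) : e₁ = e₂ := by
  funext x y
  by_cases hx : x = v
  · subst hx; exact congrFun hv y
  by_cases hy : y = v
  · subst hy; rw [h₁.1 y x, h₂.1 y x, congrFun hv x]
  rw [h₁.apply_eq_neg_gT_mul hx hy, h₂.apply_eq_neg_gT_mul hx hy, hg, congrFun hv x,
    congrFun hv y]

theorem switchT (he : IsTournament e) (X : Set V) : IsTournament (switchT e X) := by
  refine ⟨fun x y => ?_, fun x y hxy => ?_⟩
  · unfold _root_.switchT
    by_cases hxy : x ∈ X ↔ y ∈ X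
    · rw [if_pos hxy, if_pos hxy.symm, he.1]
    · rw [if_neg hxy, if_neg (mt Iff.symm hxy), he.1]
  · unfold _root_.switchT
    split_ifs
    · exact he.2 x y hxy
    · rcases he.2 x y hxy with h | h <;> simp [h]

theorem switchT_row_eq (h₁ : IsTournament e₁) (h₂ : IsTournament e₂) (v : V) :
    _root_.switchT e₁ {y | e₁ v y ≠ e₂ v y} v = e₂ v := by
  have hv : v ∉ {y | e₁ v y ≠ e₂ v y} := by simp [h₁.apply_self, h₂.apply_self]
  funext y
  unfold _root_.switchT
  by_cases hy : y ∈ {y | e₁ v y ≠ e₂ v y}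
  · rw [if_neg (by tauto)]
    have hyv : v ≠ y := fun h => hv (h ▸ hy)
    rcases h₁.2 v y hyv with h | h <;> rcases h₂.2 v y hyv with h' | h' <;>
      simp_all
  · rw [if_pos (by tauto)]
    simpa using hy

end IsTournament

theorem gT_switchT {V : Type*} (e : V → V → ℤ) (X : Set V) : gT (switchT e X) = gT e := by
  funext x y z
  unfold gT switchT
  by_cases hx : x ∈ X <;> by_cases hy : y ∈ X <;> by_cases hz : z ∈ X <;> simp [hx, hy, hz]

theorem switchEquiv_of_gT_eq {V : Type*} {e₁ e₂ : V → V → ℤ} (h₁ : IsTournament e₁)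
    (h₂ : IsTournament e₂) (hg : gT e₁ = gT e₂) : SwitchEquiv e₁ e₂ := by
  rcases isEmpty_or_nonempty V with _ | ⟨⟨v⟩⟩
  · exact ⟨∅, Subsingleton.elim _ _⟩
  refine ⟨{y | e₁ v y ≠ e₂ v y}, (IsTournament.eq_of_gT_eq_of_row_eq (h₁.switchT _) h₂ ?_ v
    (h₁.switchT_row_eq h₂ v)).symm⟩
  rw [gT_switchT, hg]

def sourceTournament {V : Type*} [DecidableEq V] (g : V → V → V → ℤ) (v : V) : V → V → ℤ :=
  fun x y => if x = v then (if y = v then 0 else 1) else if y = v then -1 else g x v y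

namespace IsOrientedTwoGraph

variable {V : Type*} {g : V → V → V → ℤ}

theorem isAlternatingTernary (hg : IsOrientedTwoGraph g) : IsAlternatingTernary g :=
  ⟨hg.1, hg.2.1⟩

theorem eq_mul_of_distinct (hg : IsOrientedTwoGraph g) {x y z w : V} (hxy : x ≠ y)
    (hxz : x ≠ z) (hxw : x ≠ w) (hyz : y ≠ z) (hyw : y ≠ w) (hzw : z ≠ w) :
    g x y z = g x w y * g y w z * g z w x := by
  have hc := hg.2.2.2 x y z w hxy hxz hxw hyz hyw hzw
  rw [hg.2.1 x y w, ← hg.1 x y w, hg.2.1 y z w, ← hg.1 y z w, hg.2.1 z x w, ← hg.1 z x w]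
  rcases hg.2.2.1 y x w hxy.symm hxw hyw with h₁ | h₁ <;>
    rcases hg.2.2.1 z y w hyz.symm hyw hzw with h₂ | h₂ <;>
    rcases hg.2.2.1 x z w hxz hzw hxw with h₃ | h₃ <;>
    rw [h₁, h₂, h₃] at hc ⊢ <;> linarith

variable [DecidableEq V]

theorem isTournament_sourceTournament (hg : IsOrientedTwoGraph g) (v : V) :
    IsTournament (sourceTournament g v) := by
  refine ⟨fun x y => ?_, fun x y hxy => ?_⟩
  · unfold sourceTournament
    by_cases hx : x = v <;> by_cases hy : y = v
    · simp [hx, hy]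
    · simp [hx, hy]
    · simp [hx, hy]
    · simp only [hx, hy, if_false]
      rw [hg.isAlternatingTernary.rotate x y v, hg.2.1 x v y]
  · unfold sourceTournament
    by_cases hx : x = v
    · subst hx; simp [Ne.symm hxy]
    by_cases hy : y = v
    · simp [hx, hy]
    simpa [hx, hy] using hg.2.2.1 x v y hx (Ne.symm hy) hxy

theorem gT_sourceTournament (hg : IsOrientedTwoGraph g) (v : V) :
    gT (sourceTournament g v) = g := by
  have hgt := (hg.isTournament_sourceTournament v).isAlternatingTernary_gT
  have hga := hg.isAlternatingTernary
  have hsource : ∀ y z, y ≠ v → z ≠ v → y ≠ z → gT (sourceTournament g v) v y z = g v y z := by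
    intro y z hy hz _
    simp only [gT, sourceTournament, hy, hz, if_true, if_false]
    rw [← hga.rotate v y z, hga.2]
    ring
  refine hgt.ext_of_distinct hga fun x y z hxy hyz hxz => ?_
  by_cases hx : x = v
  · subst hx; exact hsource y z (Ne.symm hxy) (Ne.symm hxz) hyz
  by_cases hy : y = v
  · subst hy; rw [← hgt.rotate, ← hga.rotate]; exact hsource z x hyz.symm hxy hxz.symm
  by_cases hz : z = v
  · subst hz
    rw [← hgt.rotate, ← hgt.rotate, ← hga.rotate, ← hga.rotate]
    exact hsource x y hxz hyz hxy
  simp only [gT, sourceTournament, hx, hy, hz, if_false]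
  exact (hg.eq_mul_of_distinct hxy hxz hx hyz hy hz).symm

end IsOrientedTwoGraph

theorem statement1_general {V : Type*} :
    (∀ e₁ e₂ : V → V → ℤ, IsTournament e₁ → IsTournament e₂ →
      (gT e₁ = gT e₂ ↔ SwitchEquiv e₁ e₂)) ∧
    (∀ g : V → V → V → ℤ, IsOrientedTwoGraph g →
      ∃ e : V → V → ℤ, IsTournament e ∧ gT e = g) := by
  classical
  refine ⟨fun e₁ e₂ h₁ h₂ => ⟨switchEquiv_of_gT_eq h₁ h₂, ?_⟩, fun g hg => ?_⟩
  · rintro ⟨X, rfl⟩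
    exact (gT_switchT e₁ X).symm
  rcases isEmpty_or_nonempty V with _ | ⟨⟨v⟩⟩
  · exact ⟨fun _ _ => 0, ⟨by simp, fun x => isEmptyElim x⟩, Subsingleton.elim _ _⟩
  exact ⟨_, hg.isTournament_sourceTournament v, hg.gT_sourceTournament v⟩

/-- two tournaments on `V` satisfy `g_{T1} = g_{T2}` iff they are switching
equivalent, and every oriented two-graph on `V` is of the form `g_T`.  Together these say
exactly that `T ↦ g_T` induces a well-defined bijection from switching classes of
tournaments on `V` onto oriented two-graphs on `V`. -/
theorem statement1 {V : Type*} [Fintype V] :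
    (∀ e₁ e₂ : V → V → ℤ, IsTournament e₁ → IsTournament e₂ →
      (gT e₁ = gT e₂ ↔ SwitchEquiv e₁ e₂)) ∧
    (∀ g : V → V → V → ℤ, IsOrientedTwoGraph g →
      ∃ e : V → V → ℤ, IsTournament e ∧ gT e = g) :=
  statement1_general
end

section
/- Let q ≡ 3 (mod 4) be a prime power. The function g on the projective line P¹(F_q), defined on triples of distinct projective points by g(x̄,ȳ,z̄) = χ(det(x:y)·det(y:z)·det(z:x)) for any choice of representatives x,y,z ∈ F_q²∖{0} (where det(x:y) is the determinant of the 2×2 matrix with rows x and y), is well-defined (independent of representatives), is an oriented two-graph on P¹(F_q), and is isomorphic to the Paley oriented two-graph g_q. -/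
open scoped Classical in
/-- The quadratic character `χ` of a finite field. -/
noncomputable def chi {F : Type*} [Field F] [Fintype F] (x : F) : ℤ :=
  if x = 0 then 0 else if IsSquare x then 1 else -1

/-- The sign function of the augmented Paley tournament `T_χ⁺` on `F ∪ {∞}`:
on `F` we have the Paley tournament (edge `(x,y)` iff `χ(y-x) = 1`), and every edge
between `F` and `∞` is directed towards `∞`. -/
noncomputable def paleyAug (F : Type*) [Field F] [Fintype F] :
    Option F → Option F → ℤ
  | some a, some b => chi (b - a)
  | some _, none => 1
  | none, some _ => -1
  | none, none => 0

/-- `det(x : y)`, the determinant of the 2×2 matrix with rows `x` and `y`. -/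
def det2 {F : Type*} [Field F] (x y : Fin 2 → F) : F :=
  x 0 * y 1 - x 1 * y 0

/-!
On `P¹(F_q)` fix representatives and put `e(p, q) = χ(det(p : q))`. This is a tournament: it is
nonzero on distinct points, and antisymmetric because `χ(-1) = -1` for `q ≡ 3 (mod 4)`. Rescaling
the representatives multiplies `det(x:y) det(y:z) det(z:x)` by a square, so `g = g_e` is well
defined, and `g_e` is an oriented two-graph for every tournament `e`. In the chart `a ↦ (1 : a)`,
`∞ ↦ (0 : 1)` one has `det((1:s), (1:t)) = t - s`, `det((1:s), (0:1)) = 1`, so on these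
representatives `χ ∘ det` is exactly the augmented Paley tournament `T_χ⁺`.
-/

section OrientedTwoGraph

variable {V : Type*} {e : V → V → ℤ}

lemma gT_swap_left (he : ∀ x y, e y x = -e x y) (x y z : V) : gT e y x z = -gT e x y z := by
  simp only [gT, he y x, he x z, he z y]; ring

lemma gT_swap_right (he : ∀ x y, e y x = -e x y) (x y z : V) : gT e x z y = -gT e x y z := by
  simp only [gT, he x z, he z y, he y x]; ring

theorem isOrientedTwoGraph_gT (he : ∀ x y, e y x = -e x y)
    (hsign : ∀ x y, x ≠ y → e x y = 1 ∨ e x y = -1) : IsOrientedTwoGraph (gT e) := by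
  have sq : ∀ x y, x ≠ y → e x y * e x y = 1 := fun x y hxy => by
    rcases hsign x y hxy with h | h <;> rw [h] <;> norm_num
  refine ⟨gT_swap_left he, gT_swap_right he, fun x y z hxy hyz hxz => ?_,
    fun x y z w hxy hxz hxw hyz hyw hzw => ?_⟩
  · rcases hsign x y hxy with h₁ | h₁ <;> rcases hsign y z hyz with h₂ | h₂ <;>
      rcases hsign z x hxz.symm with h₃ | h₃ <;> simp [gT, h₁, h₂, h₃]
  · -- each of the six pairs occurs once in each orientation, contributing `e·(-e) = -1`
    have key : gT e x y z * gT e y x w * gT e z y w * gT e x z w =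
        (e x y * e x y) * (e x z * e x z) * (e x w * e x w) * (e y z * e y z) *
          (e y w * e y w) * (e z w * e z w) := by
      simp only [gT, he y x, he z x, he w x, he z y, he w y, he w z]; ring
    rw [key, sq x y hxy, sq x z hxz, sq x w hxw, sq y z hyz, sq y w hyw, sq z w hzw]
    norm_num

end OrientedTwoGraph

section QuadraticCharacter

variable {F : Type*} [Field F] [Fintype F]

lemma chi_eq_quadraticChar [DecidableEq F] (x : F) : chi x = quadraticChar F x := by
  rw [quadraticChar_apply, quadraticCharFun, chi]
  congr

lemma chi_mul (a b : F) : chi (a * b) = chi a * chi b := by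
  classical
  simp only [chi_eq_quadraticChar, map_mul]

lemma chi_zero : chi (0 : F) = 0 := by simp [chi]

lemma chi_one : chi (1 : F) = 1 := by simp [chi]

lemma chi_mul_self {a : F} (ha : a ≠ 0) : chi (a * a) = 1 := by
  rw [chi, if_neg (mul_ne_zero ha ha), if_pos ⟨a, rfl⟩]

lemma chi_eq_one_or_neg_one {a : F} (ha : a ≠ 0) : chi a = 1 ∨ chi a = -1 := by
  rw [chi, if_neg ha]
  split_ifs <;> simp

lemma chi_neg_one (hq : Fintype.card F % 4 = 3) : chi (-1 : F) = -1 := by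
  rw [chi, if_neg (by simp), if_neg]
  simp [FiniteField.isSquare_neg_one_iff, hq]

lemma chi_neg (hq : Fintype.card F % 4 = 3) (a : F) : chi (-a) = -chi a := by
  rw [← neg_one_mul, chi_mul, chi_neg_one hq, neg_one_mul]

end QuadraticCharacter

section Determinant

variable {F : Type*} [Field F]

lemma det2_swap (x y : Fin 2 → F) : det2 y x = -det2 x y := by
  unfold det2; ring

lemma det2_smul_smul (a b : F) (x y : Fin 2 → F) :
    det2 (a • x) (b • y) = a * b * det2 x y := by
  simp only [det2, Pi.smul_apply, smul_eq_mul]; ring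

lemma det2_eq_det (x y : Fin 2 → F) : det2 x y = (Matrix.of ![x, y]).det := by
  simp [det2, Matrix.det_fin_two]

lemma det2_ne_zero_iff (x y : Fin 2 → F) : det2 x y ≠ 0 ↔ LinearIndependent F ![x, y] := by
  rw [det2_eq_det, ← isUnit_iff_ne_zero, ← Matrix.isUnit_iff_isUnit_det,
    ← Matrix.linearIndependent_rows_iff_isUnit]
  rfl

lemma det2_ne_zero_iff_mk_ne {x y : Fin 2 → F} (hx : x ≠ 0) (hy : y ≠ 0) :
    det2 x y ≠ 0 ↔ Projectivization.mk F x hx ≠ Projectivization.mk F y hy := by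
  rw [det2_ne_zero_iff, ← Projectivization.independent_mk_iff_LinearIndependent,
    Projectivization.independent_pair_iff_ne]

lemma det2_rep_ne_zero {p q : Projectivization F (Fin 2 → F)} (h : p ≠ q) :
    det2 p.rep q.rep ≠ 0 :=
  (det2_ne_zero_iff _ _).2 (Projectivization.linearIndependent_pair_iff_ne.2 h)

end Determinant

section AffineChart

variable {F : Type*} [Field F]

def affineRep : Option F → Fin 2 → F
  | some a => ![1, a]
  | none => ![0, 1]

lemma affineRep_ne_zero (a : Option F) : affineRep a ≠ 0 := by
  cases a <;> simp [affineRep, funext_iff, Fin.forall_fin_two]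

noncomputable def affinePoint (a : Option F) : Projectivization F (Fin 2 → F) :=
  Projectivization.mk F (affineRep a) (affineRep_ne_zero a)

lemma affinePoint_injective : Function.Injective (affinePoint (F := F)) := by
  intro a b hab
  by_contra hne
  refine (det2_ne_zero_iff_mk_ne (affineRep_ne_zero a) (affineRep_ne_zero b)).1 ?_ hab
  rcases a with _ | s <;> rcases b with _ | t <;> simp_all [affineRep, det2, sub_eq_zero, eq_comm]

lemma affinePoint_surjective : Function.Surjective (affinePoint (F := F)) := by
  intro p
  induction p using Projectivization.ind with
  | h v hv =>
    by_cases h0 : v 0 = 0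
    · have h1 : v 1 ≠ 0 := fun h1 => hv (funext fun i => by fin_cases i <;> simp [h0, h1])
      refine ⟨none, (Projectivization.mk_eq_mk_iff' _ _ _ _ _).2 ⟨(v 1)⁻¹, ?_⟩⟩
      ext i; fin_cases i <;> simp [affineRep, h0, h1]
    · refine ⟨some (v 1 / v 0), (Projectivization.mk_eq_mk_iff' _ _ _ _ _).2 ⟨(v 0)⁻¹, ?_⟩⟩
      ext i; fin_cases i <;> simp [affineRep, h0, div_eq_inv_mul]

noncomputable def affineEquiv : Option F ≃ Projectivization F (Fin 2 → F) :=
  Equiv.ofBijective affinePoint ⟨affinePoint_injective, affinePoint_surjective⟩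

lemma affineEquiv_apply (a : Option F) :
    affineEquiv a = Projectivization.mk F (affineRep a) (affineRep_ne_zero a) :=
  rfl

end AffineChart

section ProjectiveLine

variable (F : Type*) [Field F] [Fintype F]

/-- Depends on the chosen representatives; its cyclic triple products `gT` do not. -/
noncomputable def repTournament (p q : Projectivization F (Fin 2 → F)) : ℤ :=
  chi (det2 p.rep q.rep)

variable {F}

lemma repTournament_swap (hq : Fintype.card F % 4 = 3) (p q : Projectivization F (Fin 2 → F)) :
    repTournament F q p = -repTournament F p q := by
  rw [repTournament, repTournament, det2_swap, chi_neg hq]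

lemma repTournament_eq_one_or_neg_one {p q : Projectivization F (Fin 2 → F)} (h : p ≠ q) :
    repTournament F p q = 1 ∨ repTournament F p q = -1 :=
  chi_eq_one_or_neg_one (det2_rep_ne_zero h)

lemma gT_repTournament_mk {x y z : Fin 2 → F} (hx : x ≠ 0) (hy : y ≠ 0) (hz : z ≠ 0) :
    gT (repTournament F) (Projectivization.mk F x hx) (Projectivization.mk F y hy)
        (Projectivization.mk F z hz) = chi (det2 x y * det2 y z * det2 z x) := by
  obtain ⟨a, ha⟩ := Projectivization.exists_smul_eq_mk_rep F x hx
  obtain ⟨b, hb⟩ := Projectivization.exists_smul_eq_mk_rep F y hy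
  obtain ⟨c, hc⟩ := Projectivization.exists_smul_eq_mk_rep F z hz
  have habc : (a * b * c : F) ≠ 0 := by simp
  simp only [gT, repTournament, ← chi_mul, ← ha, ← hb, ← hc, Units.smul_def, det2_smul_smul]
  rw [show (a : F) * b * det2 x y * (b * c * det2 y z) * (c * a * det2 z x) =
      (a * b * c) * (a * b * c) * (det2 x y * det2 y z * det2 z x) by ring,
    chi_mul, chi_mul_self habc, one_mul]

/-- The Paley tournament is `χ ∘ det` on the representatives `(1, a)` of the affine points and
`(0, 1)` of the point at infinity. -/
lemma chi_det2_affineRep (hq : Fintype.card F % 4 = 3) (a b : Option F) :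
    chi (det2 (affineRep a) (affineRep b)) = paleyAug F a b := by
  rcases a with _ | s <;> rcases b with _ | t <;>
    simp [affineRep, det2, paleyAug, chi_zero, chi_one, chi_neg_one hq]

end ProjectiveLine

/-- for a finite field of order `q ≡ 3 (mod 4)`, there is a (well-defined)
function `g` on the projective line `P¹(F_q)` with
`g(x̄,ȳ,z̄) = χ(det(x:y)·det(y:z)·det(z:x))` for any representatives `x, y, z`; it is an
oriented two-graph, and it is isomorphic to the Paley oriented two-graph
`g_q = g_{T_χ⁺}`. -/
theorem statement6 (F : Type*) [Field F] [Fintype F] (hq : Fintype.card F % 4 = 3) :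
    ∃ g : Projectivization F (Fin 2 → F) → Projectivization F (Fin 2 → F) →
        Projectivization F (Fin 2 → F) → ℤ,
      (∀ (x y z : Fin 2 → F) (hx : x ≠ 0) (hy : y ≠ 0) (hz : z ≠ 0),
        g (Projectivization.mk F x hx) (Projectivization.mk F y hy)
            (Projectivization.mk F z hz) =
          chi (det2 x y * det2 y z * det2 z x)) ∧
      IsOrientedTwoGraph g ∧
      ∃ φ : Option F ≃ Projectivization F (Fin 2 → F),
        ∀ a b c : Option F, g (φ a) (φ b) (φ c) = gT (paleyAug F) a b c := by
  refine ⟨gT (repTournament F), fun x y z hx hy hz => gT_repTournament_mk hx hy hz,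
    isOrientedTwoGraph_gT (repTournament_swap hq) fun _ _ => repTournament_eq_one_or_neg_one,
    affineEquiv, fun a b c => ?_⟩
  rw [affineEquiv_apply, affineEquiv_apply, affineEquiv_apply, gT_repTournament_mk, chi_mul,
    chi_mul, chi_det2_affineRep hq, chi_det2_affineRep hq, chi_det2_affineRep hq, gT]
end

section
/- Let r ≥ 2 and let H be an r-uniform hypergraph on n vertices containing no copy of the r-triangle H(r), i.e., no set of r+1 vertices spans 3 or more edges. Then the number of edges of H is at most (n/r²)·C(n,r−1), with equality if and only if every set of r−1 vertices is contained in exactly n/r edges. -/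
/-!
Write `d(B)` for the codegree of an `(r-1)`-set `B` and `n = |V|`. Double counting gives
`∑ d(B) = r |H|` and `∑ d(B)² = ∑_{A ∈ H} ∑_{B ⊂ A} d(B)`. For a fixed edge `A`, the pairs
`(B, A')` with `B ⊂ A` and `B ⊆ A' ∈ H` are determined by the vertex `A' \ B`: two distinct
edges adding the same vertex `y ∉ A` would lie with `A` in the `(r+1)`-set `A ∪ {y}`. So the
inner sum is at most `n`, whence `∑ d(B)² ≤ n |H|` and
`∑ (d(B) - n/r)² ≤ n (n C(n, r-1) / r² - |H|)`. This gives the bound, and equality forces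
every `d(B) = n/r`.
-/

open Finset

section Codegree

variable {V : Type*} [DecidableEq V]

def codegree (H : Finset (Finset V)) (B : Finset V) : ℕ := #{A ∈ H | B ⊆ A}

lemma bipartiteBelow_subset_powersetCard_univ [Fintype V] (k : ℕ) (A : Finset V) :
    (univ.powersetCard k).bipartiteBelow (· ⊆ ·) A = A.powersetCard k := by
  ext B
  simp [mem_bipartiteBelow, mem_powersetCard, and_comm]

lemma sum_codegree_powersetCard [Fintype V] (H : Finset (Finset V)) (k : ℕ) :
    ∑ B ∈ univ.powersetCard k, codegree H B = ∑ A ∈ H, (#A).choose k := by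
  have := sum_card_bipartiteAbove_eq_sum_card_bipartiteBelow (s := univ.powersetCard k) (t := H)
    (r := (· ⊆ ·))
  simp only [bipartiteBelow_subset_powersetCard_univ, card_powersetCard] at this
  exact this

lemma sum_codegree_sq_powersetCard [Fintype V] (H : Finset (Finset V)) (k : ℕ) :
    ∑ B ∈ univ.powersetCard k, codegree H B ^ 2 =
      ∑ A ∈ H, ∑ B ∈ A.powersetCard k, codegree H B := by
  have := sum_sum_bipartiteAbove_eq_sum_sum_bipartiteBelow (s := univ.powersetCard k) (t := H)
    (r := (· ⊆ ·)) (fun B _ => codegree H B)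
  simp only [bipartiteBelow_subset_powersetCard_univ, sum_const, smul_eq_mul] at this
  rw [← this]
  exact sum_congr rfl fun B _ => sq (codegree H B)

variable {r : ℕ} {H : Finset (Finset V)}

lemma edge_eq_of_subset_of_card_eq_succ
    (hfree : ∀ S : Finset V, S.card = r + 1 → (H.filter (fun A => A ⊆ S)).card ≤ 2)
    {S A A' A'' : Finset V} (hS : #S = r + 1) (hA : A ∈ H) (hA' : A' ∈ H) (hA'' : A'' ∈ H)
    (hAS : A ⊆ S) (hA'S : A' ⊆ S) (hA''S : A'' ⊆ S) (hA'A : A' ≠ A) (hA''A : A'' ≠ A) :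
    A' = A'' := by
  by_contra hne
  have hsub : {A, A', A''} ⊆ H.filter (· ⊆ S) := by
    simp [insert_subset_iff, *]
  have hcard : #{A, A', A''} = 3 := by
    rw [card_insert_of_notMem (by simp [Ne.symm hA'A, Ne.symm hA''A]),
      card_pair hne]
  have := card_le_card hsub
  have := hfree S hS
  omega

lemma edge_eq_of_sdiff_eq (hr : 1 ≤ r) (huniform : ∀ A ∈ H, A.card = r)
    (hfree : ∀ S : Finset V, S.card = r + 1 → (H.filter (fun A => A ⊆ S)).card ≤ 2)
    {A A' A'' B B' : Finset V} (hA : A ∈ H) (hA' : A' ∈ H) (hA'' : A'' ∈ H)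
    (hBA : B ⊆ A) (hB'A : B' ⊆ A) (hBA' : B ⊆ A') (hB'A'' : B' ⊆ A'')
    (hB : #B = r - 1) (hsdiff : A' \ B = A'' \ B') : A' = A'' := by
  set D := A' \ B
  have hA'_eq : A' = B ∪ D := (union_sdiff_of_subset hBA').symm
  have hA''_eq : A'' = B' ∪ D := by rw [hsdiff, union_sdiff_of_subset hB'A'']
  have hA'AD : A' ⊆ A ∪ D := hA'_eq ▸ union_subset_union hBA subset_rfl
  have hA''AD : A'' ⊆ A ∪ D := hA''_eq ▸ union_subset_union hB'A subset_rfl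
  obtain ⟨y, hy⟩ : ∃ y, D = {y} := card_eq_one.mp (by
    rw [card_sdiff_of_subset hBA', huniform _ hA', hB]; omega)
  by_cases hyA : y ∈ A
  · have hAD : A ∪ D = A := by simpa [hy]
    have edge_eq (E : Finset V) (hE : E ∈ H) (hEA : E ⊆ A) : E = A :=
      eq_of_subset_of_card_le hEA (by rw [huniform _ hE, huniform _ hA])
    rw [edge_eq A' hA' (hAD ▸ hA'AD), edge_eq A'' hA'' (hAD ▸ hA''AD)]
  · have hyA' : y ∈ A' := by simp [hA'_eq, hy]
    have hyA'' : y ∈ A'' := by simp [hA''_eq, hy]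
    refine edge_eq_of_subset_of_card_eq_succ hfree (S := A ∪ D) ?_ hA hA' hA''
      subset_union_left hA'AD hA''AD (by rintro rfl; exact hyA hyA')
      (by rintro rfl; exact hyA hyA'')
    rw [hy, union_comm, ← insert_eq, card_insert_of_notMem hyA, huniform _ hA]

lemma sum_codegree_powersetCard_le_card [Fintype V] (hr : 1 ≤ r)
    (huniform : ∀ A ∈ H, A.card = r)
    (hfree : ∀ S : Finset V, S.card = r + 1 → (H.filter (fun A => A ⊆ S)).card ≤ 2)
    {A : Finset V} (hA : A ∈ H) :
    ∑ B ∈ A.powersetCard (r - 1), codegree H B ≤ Fintype.card V := by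
  have hmaps : Set.MapsTo (fun p : (_ : Finset V) × Finset V => p.2 \ p.1)
      ((A.powersetCard (r - 1)).sigma fun B => {A' ∈ H | B ⊆ A'})
      (univ.powersetCard 1 : Finset (Finset V)) := by
    simp only [Set.MapsTo, coe_sigma, Set.mem_sigma_iff, mem_coe, mem_powersetCard, mem_filter,
      subset_univ, true_and, and_imp]
    intro p _ hB hA' hBA'
    rw [card_sdiff_of_subset hBA', huniform _ hA', hB]
    omega
  have hinj : Set.InjOn (fun p : (_ : Finset V) × Finset V => p.2 \ p.1)
      ((A.powersetCard (r - 1)).sigma fun B => {A' ∈ H | B ⊆ A'}) := by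
    rintro ⟨B, A'⟩ hp ⟨B', A''⟩ hq (hsdiff : A' \ B = A'' \ B')
    simp only [coe_sigma, Set.mem_sigma_iff, mem_coe, mem_powersetCard, mem_filter] at hp hq
    have hA'A'' : A' = A'' := edge_eq_of_sdiff_eq hr huniform hfree hA hp.2.1 hq.2.1 hp.1.1 hq.1.1
      hp.2.2 hq.2.2 hp.1.2 hsdiff
    subst hA'A''
    rw [← Finset.sdiff_sdiff_eq_self hp.2.2, hsdiff, Finset.sdiff_sdiff_eq_self hq.2.2]
  calc ∑ B ∈ A.powersetCard (r - 1), codegree H B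
      = #((A.powersetCard (r - 1)).sigma fun B => {A' ∈ H | B ⊆ A'}) := (card_sigma _ _).symm
    _ ≤ #(univ.powersetCard 1 : Finset (Finset V)) := card_le_card_of_injOn _ hmaps hinj
    _ = Fintype.card V := by simp

lemma sum_codegree_eq_mul_card [Fintype V] (hr : 1 ≤ r) (huniform : ∀ A ∈ H, A.card = r) :
    ∑ B ∈ univ.powersetCard (r - 1), codegree H B = r * #H := by
  rw [sum_codegree_powersetCard, sum_congr rfl fun A hA => by rw [huniform A hA],
    sum_const, smul_eq_mul, Nat.choose_symm_of_eq_add (by omega : r = r - 1 + 1),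
    Nat.choose_one_right, mul_comm]

lemma sum_codegree_sq_le_card_mul_card [Fintype V] (hr : 1 ≤ r)
    (huniform : ∀ A ∈ H, A.card = r)
    (hfree : ∀ S : Finset V, S.card = r + 1 → (H.filter (fun A => A ⊆ S)).card ≤ 2) :
    ∑ B ∈ univ.powersetCard (r - 1), codegree H B ^ 2 ≤ Fintype.card V * #H := by
  rw [sum_codegree_sq_powersetCard, mul_comm, ← smul_eq_mul, ← sum_const]
  exact sum_le_sum fun A hA => sum_codegree_powersetCard_le_card hr huniform hfree hA

lemma sum_sq_codegree_sub_le [Fintype V] (hr : 1 ≤ r) (huniform : ∀ A ∈ H, A.card = r)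
    (hfree : ∀ S : Finset V, S.card = r + 1 → (H.filter (fun A => A ⊆ S)).card ≤ 2) :
    ∑ B ∈ univ.powersetCard (r - 1), ((codegree H B : ℚ) - Fintype.card V / r) ^ 2 ≤
      Fintype.card V * (Fintype.card V / (r : ℚ) ^ 2 * (Fintype.card V).choose (r - 1) - #H) := by
  have hsum : ∑ B ∈ univ.powersetCard (r - 1), (codegree H B : ℚ) = r * #H := by
    exact_mod_cast sum_codegree_eq_mul_card hr huniform
  have hsum_sq : ∑ B ∈ univ.powersetCard (r - 1), (codegree H B : ℚ) ^ 2 ≤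
      Fintype.card V * #H := by
    exact_mod_cast sum_codegree_sq_le_card_mul_card hr huniform hfree
  have hr0 : (r : ℚ) ≠ 0 := by exact_mod_cast (by omega : r ≠ 0)
  simp only [sub_sq, sum_add_distrib, sum_sub_distrib, ← sum_mul, ← mul_sum, sum_const,
    nsmul_eq_mul, card_powersetCard, card_univ, hsum]
  have : 2 * (r * #H : ℚ) * (Fintype.card V / r) = 2 * Fintype.card V * #H := by field_simp
  linear_combination hsum_sq - this

end Codegree

/-- let `r ≥ 2` and let `H` be an `r`-uniform hypergraph on a finite vertex
set `V` of size `n` containing no copy of the `r`-triangle `H(r)` (no `(r+1)`-set of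
vertices spans 3 or more edges).  Then `|E(H)| ≤ (n/r²)·C(n,r-1)`, with equality iff
every set of `r-1` vertices is contained in exactly `n/r` edges. -/
theorem statement8 {V : Type*} [Fintype V] [DecidableEq V] (r : ℕ) (hr : 2 ≤ r)
    (H : Finset (Finset V)) (huniform : ∀ A ∈ H, A.card = r)
    (hfree : ∀ S : Finset V, S.card = r + 1 → (H.filter (fun A => A ⊆ S)).card ≤ 2) :
    (H.card : ℚ) ≤ (Fintype.card V : ℚ) / (r : ℚ) ^ 2 * ((Fintype.card V).choose (r - 1) : ℚ) ∧
    ((H.card : ℚ) = (Fintype.card V : ℚ) / (r : ℚ) ^ 2 * ((Fintype.card V).choose (r - 1) : ℚ) ↔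
      ∀ B : Finset V, B.card = r - 1 →
        ((H.filter (fun A => B ⊆ A)).card : ℚ) = (Fintype.card V : ℚ) / (r : ℚ)) := by
  have hr1 : 1 ≤ r := by omega
  have hdev := sum_sq_codegree_sub_le hr1 huniform hfree
  have hdev_nonneg := sum_nonneg fun B (_ : B ∈ univ.powersetCard (r - 1)) =>
    sq_nonneg ((codegree H B : ℚ) - Fintype.card V / r)
  refine ⟨?_, fun heq B hB => ?_, fun hcodeg => ?_⟩
  · rcases (Fintype.card V).eq_zero_or_pos with hn | hn
    · have hH : H = ∅ := eq_empty_of_forall_notMem fun A hA => by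
        have := A.card_le_univ
        rw [huniform A hA, hn] at this
        omega
      simp only [hH, card_empty, Nat.cast_zero]
      positivity
    · have := nonneg_of_mul_nonneg_right (hdev_nonneg.trans hdev) (by exact_mod_cast hn)
      linarith
  · rw [← heq, sub_self, mul_zero] at hdev
    have hB0 := (sum_eq_zero_iff_of_nonneg fun B _ => sq_nonneg _).mp (hdev.antisymm hdev_nonneg)
      B (mem_powersetCard.mpr ⟨subset_univ B, hB⟩)
    exact sub_eq_zero.mp (pow_eq_zero_iff two_ne_zero |>.mp hB0)
  · have hcodeg' : ∀ B ∈ univ.powersetCard (r - 1), (codegree H B : ℚ) = Fintype.card V / r :=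
      fun B hB => hcodeg B (mem_powersetCard.mp hB).2
    have hsum : ((r * #H : ℕ) : ℚ) = (Fintype.card V).choose (r - 1) * (Fintype.card V / r) := by
      rw [← sum_codegree_eq_mul_card hr1 huniform, Nat.cast_sum, sum_congr rfl hcodeg', sum_const,
        card_powersetCard, card_univ, nsmul_eq_mul]
    have hr0 : (r : ℚ) ≠ 0 := by positivity
    push_cast at hsum
    field_simp at hsum ⊢
    linear_combination hsum
end

section
/- For every r ≥ 2, the Turán density of the r-triangle satisfies 1/2^{r−1} ≤ π(H(r)) ≤ 1/r. -/
/-- An `r`-uniform hypergraph containing no copy of the `r`-triangle `H(r)` (the unique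
`r`-graph on `r+1` vertices with 3 edges): no set of `r+1` vertices spans 3 or more
edges. -/
def TriangleFree (r : ℕ) {V : Type*} [DecidableEq V] (H : Finset (Finset V)) : Prop :=
  (∀ A ∈ H, A.card = r) ∧
  ∀ S : Finset V, S.card = r + 1 → (H.filter (fun A => A ⊆ S)).card ≤ 2

/-- `ex(H(r), n)`: the maximum number of edges of an `H(r)`-free `r`-graph on `n`
vertices. -/
noncomputable def exTri (r n : ℕ) : ℕ :=
  sSup {m | ∃ H : Finset (Finset (Fin n)), TriangleFree r H ∧ H.card = m}

/-!
Deleting a vertex of an extremal `H(r)`-free graph on `n + 1` vertices and averaging over the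
vertex gives `(n + 1 - r) ex(n + 1) ≤ (n + 1) ex(n)`, so `ex(n) / C(n, r)` is non-increasing for
`n ≥ r` and converges.

Upper bound: if `F` is an `(r-1)`-subset of an edge `A`, every edge `B ⊇ F` other than `A` is
`F ∪ {v}` with `v ∉ A`, and `v` determines `B` because `A ∪ {v}` spans at most two edges. So the
codegrees of the `(r-1)`-subsets of an edge sum to at most `r + (n - r) = n`. Summing over the
edges and applying Cauchy–Schwarz to the codegrees gives `r² ex(n) ≤ n C(n, r-1)`, that is
`ex(n) / C(n, r) ≤ n / (r (n + 1 - r))`.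

Lower bound: call a set of naturals alternating if its consecutive elements differ by odd numbers.
At most two of the `r`-subsets `S \ {a}` of an `(r+1)`-set `S` are alternating, so the alternating
`r`-subsets of `{0, …, 2m-1}` form an `H(r)`-free family. It has at least `2 C(m, r)` members, and
`2 C(m, r) / C(2m, r) → 2^(1-r)`.
-/

open Finset Filter Topology

theorem card_preimage_map_of_forall_mem_range {V W : Type*}
    {H : Finset (Finset V)} (e : W ↪ V) (hH : ∀ A ∈ H, ∀ x ∈ A, x ∈ Set.range e) :
    #(H.preimage (map e) (map_injective e).injOn) = #H := by
  classical
  rw [card_preimage, filter_true_of_mem]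
  intro A hA
  obtain ⟨B, -, hB⟩ := subset_set_image_iff.1 (show (A : Set V) ⊆ e '' Set.univ by
    simpa [Set.subset_def] using hH A hA)
  exact ⟨B, by simpa [map_eq_image] using hB⟩

namespace TriangleFree

variable {r : ℕ} {V : Type*} [DecidableEq V] {H H' : Finset (Finset V)}

theorem mono (h : TriangleFree r H) (hH' : H' ⊆ H) : TriangleFree r H' :=
  ⟨fun A hA => h.1 A (hH' hA), fun S hS =>
    (card_le_card (filter_subset_filter _ hH')).trans (h.2 S hS)⟩

theorem subset_powersetCard [Fintype V] (h : TriangleFree r H) : H ⊆ univ.powersetCard r := by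
  intro A hA
  simp [h.1 A hA]

theorem card_le_choose [Fintype V] (h : TriangleFree r H) : #H ≤ (Fintype.card V).choose r := by
  simpa using card_le_card h.subset_powersetCard

theorem comap {W : Type*} [DecidableEq W] (h : TriangleFree r H) (e : W ↪ V) :
    TriangleFree r (H.preimage (map e) (map_injective e).injOn) := by
  refine ⟨fun A hA => by simpa using h.1 _ (mem_preimage.1 hA), fun S hS => ?_⟩
  refine le_trans ?_ (h.2 (S.map e) (by simpa using hS))
  refine card_le_card_of_injOn (map e) (fun A hA => ?_) (map_injective e).injOn
  simp only [coe_filter, Set.mem_ofPred_eq, mem_preimage] at hA ⊢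
  exact ⟨hA.1, map_subset_map.2 hA.2⟩

theorem eq_of_subset_of_ne (h : TriangleFree r H) {S A B C : Finset V} (hS : #S = r + 1)
    (hA : A ∈ H) (hB : B ∈ H) (hC : C ∈ H) (hAS : A ⊆ S) (hBS : B ⊆ S) (hCS : C ⊆ S)
    (hAB : A ≠ B) (hAC : A ≠ C) : B = C := by
  by_contra hBC
  have hsub : {A, B, C} ⊆ H.filter (· ⊆ S) := by
    simp [insert_subset_iff, hA, hB, hC, hAS, hBS, hCS]
  have := (card_le_card hsub).trans (h.2 S hS)
  rw [card_eq_three.2 ⟨A, B, C, hAB, hAC, hBC, rfl⟩] at this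
  omega

theorem eq_of_mem_of_subset_insert (h : TriangleFree r H) {A B B' : Finset V} {v : V}
    (hA : A ∈ H) (hB : B ∈ H) (hB' : B' ∈ H) (hBA : B ⊆ insert v A)
    (hB'A : B' ⊆ insert v A) (hvB : v ∈ B) (hvB' : v ∈ B') : B = B' := by
  by_cases hvA : v ∈ A
  · rw [insert_eq_of_mem hvA] at hBA hB'A
    rw [eq_of_subset_of_card_le hBA (by rw [h.1 A hA, h.1 B hB]),
      eq_of_subset_of_card_le hB'A (by rw [h.1 A hA, h.1 B' hB'])]
  · exact h.eq_of_subset_of_ne (by rw [card_insert_of_notMem hvA, h.1 A hA]) hA hB hB'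
      (subset_insert v A) hBA hB'A (fun e => hvA (e ▸ hvB)) (fun e => hvA (e ▸ hvB'))

theorem sum_codegree_le [Fintype V] (h : TriangleFree r H) (hr : 1 ≤ r) {A : Finset V}
    (hA : A ∈ H) :
    ∑ F ∈ A.powersetCard (r - 1), #{B ∈ H | F ⊆ B} ≤ Fintype.card V := by
  rw [← card_sigma]
  have hsingle : ∀ p ∈ (A.powersetCard (r - 1)).sigma (fun F => {B ∈ H | F ⊆ B}),
      ∃ v, p.2 \ p.1 = {v} := by
    rintro ⟨F, B⟩ hp
    simp only [mem_sigma, mem_powersetCard, mem_filter] at hp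
    obtain ⟨⟨-, hF⟩, hB, hFB⟩ := hp
    apply card_eq_one.1
    rw [card_sdiff_of_subset hFB, h.1 B hB, hF]
    omega
  calc _ ≤ #((univ : Finset V).powersetCard 1) := by
        refine card_le_card_of_injOn (fun p => p.2 \ p.1) (fun p hp => ?_) ?_
        · obtain ⟨v, hv⟩ := hsingle p hp
          simp [hv]
        · rintro ⟨F, B⟩ hp ⟨F', B'⟩ hp' (hBF : B \ F = B' \ F')
          obtain ⟨v, hv⟩ := hsingle _ hp
          simp only [mem_coe, mem_sigma, mem_powersetCard, mem_filter] at hp hp'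
          obtain ⟨⟨hFA, -⟩, hB, hFB⟩ := hp
          obtain ⟨⟨hF'A, -⟩, hB', hF'B'⟩ := hp'
          have hBv : B = F ∪ {v} := by rw [← hv, union_sdiff_of_subset hFB]
          have hB'v : B' = F' ∪ {v} := by rw [← hv, hBF, union_sdiff_of_subset hF'B']
          obtain rfl : B = B' := h.eq_of_mem_of_subset_insert hA hB hB'
            (hBv ▸ union_subset (hFA.trans (subset_insert v A)) (by simp))
            (hB'v ▸ union_subset (hF'A.trans (subset_insert v A)) (by simp))
            (by simp [hBv]) (by simp [hB'v])
          rw [Sigma.mk.injEq, ← Finset.sdiff_sdiff_eq_self hFB,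
            ← Finset.sdiff_sdiff_eq_self hF'B', hBF]
          simp
    _ = Fintype.card V := by simp

theorem sq_mul_card_le [Fintype V] (h : TriangleFree r H) (hr : 1 ≤ r) :
    r ^ 2 * #H ≤ Fintype.card V * (Fintype.card V).choose (r - 1) := by
  set Ω := (univ : Finset V).powersetCard (r - 1)
  set d : Finset V → ℕ := fun F => #{B ∈ H | F ⊆ B}
  have hbelow : ∀ A ∈ H, Ω.bipartiteBelow (· ⊆ ·) A = A.powersetCard (r - 1) := by
    intro A _
    ext F
    simp [Ω, bipartiteBelow, and_comm]
  have hsum : ∑ F ∈ Ω, d F = r * #H := by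
    calc ∑ F ∈ Ω, d F = ∑ A ∈ H, #(Ω.bipartiteBelow (· ⊆ ·) A) :=
          sum_card_bipartiteAbove_eq_sum_card_bipartiteBelow _
      _ = ∑ _A ∈ H, r := sum_congr rfl fun A hA => by
          rw [hbelow A hA, card_powersetCard, h.1 A hA, Nat.choose_symm hr, Nat.choose_one_right]
      _ = r * #H := by rw [sum_const, smul_eq_mul, mul_comm]
  have hsum_sq : ∑ F ∈ Ω, d F ^ 2 = ∑ A ∈ H, ∑ F ∈ A.powersetCard (r - 1), d F := by
    calc ∑ F ∈ Ω, d F ^ 2 = ∑ F ∈ Ω, ∑ _A ∈ H.bipartiteAbove (· ⊆ ·) F, d F := by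
          simp [sq, d, bipartiteAbove]
      _ = ∑ A ∈ H, ∑ F ∈ Ω.bipartiteBelow (· ⊆ ·) A, d F :=
          sum_sum_bipartiteAbove_eq_sum_sum_bipartiteBelow _ _
      _ = ∑ A ∈ H, ∑ F ∈ A.powersetCard (r - 1), d F :=
          sum_congr rfl fun A hA => by rw [hbelow A hA]
  have hcs : (r * #H) ^ 2 ≤ (Fintype.card V).choose (r - 1) * (#H * Fintype.card V) := by
    calc (r * #H) ^ 2 = (∑ F ∈ Ω, d F) ^ 2 := by rw [hsum]
      _ ≤ #Ω * ∑ F ∈ Ω, d F ^ 2 := sq_sum_le_card_mul_sum_sq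
      _ ≤ (Fintype.card V).choose (r - 1) * (#H * Fintype.card V) := by
        rw [hsum_sq, card_powersetCard, card_univ]
        gcongr
        exact (sum_le_sum fun A hA => h.sum_codegree_le hr hA).trans_eq (by simp)
  rcases (#H).eq_zero_or_pos with hH | hH
  · simp [hH]
  · refine Nat.le_of_mul_le_mul_right (c := #H) ?_ hH
    calc r ^ 2 * #H * #H = (r * #H) ^ 2 := by ring
      _ ≤ (Fintype.card V).choose (r - 1) * (#H * Fintype.card V) := hcs
      _ = Fintype.card V * (Fintype.card V).choose (r - 1) * #H := by ring

end TriangleFree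

section exTri

variable {r n : ℕ}

theorem bddAbove_card_triangleFree :
    BddAbove {m | ∃ H : Finset (Finset (Fin n)), TriangleFree r H ∧ #H = m} :=
  ⟨n.choose r, by rintro _ ⟨H, hH, rfl⟩; simpa using hH.card_le_choose⟩

theorem exists_triangleFree_card_eq_exTri :
    ∃ H : Finset (Finset (Fin n)), TriangleFree r H ∧ #H = exTri r n := by
  have hne : {m | ∃ H : Finset (Finset (Fin n)), TriangleFree r H ∧ #H = m}.Nonempty :=
    ⟨0, ∅, ⟨by simp, by simp⟩, rfl⟩
  exact Nat.sSup_mem hne bddAbove_card_triangleFree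

theorem TriangleFree.card_le_exTri {H : Finset (Finset (Fin n))} (h : TriangleFree r H) :
    #H ≤ exTri r n :=
  le_csSup bddAbove_card_triangleFree ⟨H, h, rfl⟩

theorem TriangleFree.card_le_exTri_of_embedding {V : Type*} [DecidableEq V]
    {H : Finset (Finset V)} (h : TriangleFree r H) (e : Fin n ↪ V)
    (hH : ∀ A ∈ H, ∀ x ∈ A, x ∈ Set.range e) : #H ≤ exTri r n := by
  rw [← card_preimage_map_of_forall_mem_range e hH]
  exact (h.comap e).card_le_exTri

theorem sq_mul_exTri_le (hr : 1 ≤ r) : r ^ 2 * exTri r n ≤ n * n.choose (r - 1) := by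
  obtain ⟨H, hH, hcard⟩ := exists_triangleFree_card_eq_exTri (r := r) (n := n)
  simpa [hcard] using hH.sq_mul_card_le hr

theorem sub_mul_exTri_succ_le : (n + 1 - r) * exTri r (n + 1) ≤ (n + 1) * exTri r n := by
  obtain ⟨H, hH, hcard⟩ := exists_triangleFree_card_eq_exTri (r := r) (n := n + 1)
  have hdelete : ∀ v : Fin (n + 1), #(H.bipartiteAbove (· ∉ ·) v) ≤ exTri r n := fun v =>
    (hH.mono (filter_subset _ _)).card_le_exTri_of_embedding v.succAboveEmb fun A hA x hx => by
      simp only [Fin.coe_succAboveEmb, Fin.range_succAbove, Set.mem_compl_singleton_iff]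
      rintro rfl
      exact (mem_filter.1 hA).2 hx
  calc (n + 1 - r) * exTri r (n + 1) = ∑ _A ∈ H, (n + 1 - r) := by simp [← hcard, mul_comm]
    _ = ∑ A ∈ H, #(univ.bipartiteBelow (· ∉ ·) A) := sum_congr rfl fun A hA => by
        simp [bipartiteBelow, filter_not, card_sdiff, hH.1 A hA]
    _ = ∑ v, #(H.bipartiteAbove (· ∉ ·) v) :=
        (sum_card_bipartiteAbove_eq_sum_card_bipartiteBelow _).symm
    _ ≤ ∑ _v : Fin (n + 1), exTri r n := sum_le_sum fun v _ => hdelete v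
    _ = (n + 1) * exTri r n := by simp

theorem antitoneOn_exTri_div_choose (r : ℕ) :
    AntitoneOn (fun n => (exTri r n : ℝ) / n.choose r) (Set.Ici r) := by
  refine antitoneOn_nat_Ici_of_succ_le fun n hn => ?_
  rw [div_le_div_iff₀ (by exact_mod_cast Nat.choose_pos (by omega))
    (by exact_mod_cast Nat.choose_pos hn)]
  have key : exTri r (n + 1) * n.choose r * (n + 1) ≤ exTri r n * (n + 1).choose r * (n + 1) :=
    calc exTri r (n + 1) * n.choose r * (n + 1)
        = (n + 1 - r) * exTri r (n + 1) * (n + 1).choose r := by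
          rw [mul_assoc, Nat.choose_mul_succ_eq]; ring
      _ ≤ (n + 1) * exTri r n * (n + 1).choose r := Nat.mul_le_mul_right _ sub_mul_exTri_succ_le
      _ = exTri r n * (n + 1).choose r * (n + 1) := by ring
  exact_mod_cast Nat.le_of_mul_le_mul_right key n.succ_pos

theorem exists_tendsto_exTri_div_choose (r : ℕ) :
    ∃ L : ℝ, Tendsto (fun n => (exTri r n : ℝ) / n.choose r) atTop (𝓝 L) :=
  ⟨_, Real.tendsto_atTop_csInf_of_antitoneOn_bddBelow_nat_Ici (antitoneOn_exTri_div_choose r)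
    ⟨0, by rintro _ ⟨n, -, rfl⟩; positivity⟩⟩

end exTri

/-- If `a < b` are consecutive elements of `A`, then
`rankParity A b - rankParity A a = (b - a) + 1`, so `IsAlternating A` says that consecutive elements
of `A` differ by odd numbers. -/
def rankParity (A : Finset ℕ) (x : ℕ) : ZMod 2 := ((x + #{y ∈ A | y < x} : ℕ) : ZMod 2)

def IsAlternating (A : Finset ℕ) : Prop :=
  ∀ x ∈ A, ∀ y ∈ A, rankParity A x = rankParity A y

instance : DecidablePred IsAlternating := fun A =>
  inferInstanceAs (Decidable (∀ x ∈ A, ∀ y ∈ A, rankParity A x = rankParity A y))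

def alternatingFamily (r n : ℕ) : Finset (Finset ℕ) :=
  {A ∈ (range n).powersetCard r | IsAlternating A}

theorem rankParity_erase {S : Finset ℕ} {a : ℕ} (ha : a ∈ S) (x : ℕ) :
    rankParity (S.erase a) x = rankParity S x + if a < x then 1 else 0 := by
  have hcard : #{y ∈ S | y < x} = #{y ∈ S.erase a | y < x} + if a < x then 1 else 0 := by
    rw [filter_erase]
    split_ifs with hax
    · exact (card_erase_add_one (mem_filter.2 ⟨ha, hax⟩)).symm
    · rw [erase_eq_of_notMem (by simp [hax]), add_zero]
  rw [rankParity, rankParity, hcard]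
  push_cast
  grind

theorem eq_of_isAlternating_erase {S : Finset ℕ} {a b c : ℕ} (ha : a ∈ S) (hb : b ∈ S)
    (hc : c ∈ S) (hA : IsAlternating (S.erase a)) (hB : IsAlternating (S.erase b))
    (hC : IsAlternating (S.erase c)) (hab : a ≠ b) (hac : a ≠ c) : b = c := by
  by_contra hbc
  have h1 := hA b (mem_erase.2 ⟨Ne.symm hab, hb⟩) c (mem_erase.2 ⟨Ne.symm hac, hc⟩)
  have h2 := hB a (mem_erase.2 ⟨hab, ha⟩) c (mem_erase.2 ⟨hbc ∘ Eq.symm, hc⟩)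
  have h3 := hC a (mem_erase.2 ⟨hac, ha⟩) b (mem_erase.2 ⟨hbc, hb⟩)
  rw [rankParity_erase ha, rankParity_erase ha] at h1
  rw [rankParity_erase hb, rankParity_erase hb] at h2
  rw [rankParity_erase hc, rankParity_erase hc] at h3
  -- Adding `h1`, `h2`, `h3`, each pair `x ≠ y` among `a, b, c` contributes
  -- `[x < y] + [y < x] = 1`, so `1 + 1 + 1 = 0` in `ZMod 2`.
  grind

theorem triangleFree_alternatingFamily (r n : ℕ) : TriangleFree r (alternatingFamily r n) := by
  refine ⟨fun A hA => (mem_powersetCard.1 (mem_filter.1 hA).1).2, fun S hS => ?_⟩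
  have hErase : ∀ A ∈ {A ∈ alternatingFamily r n | A ⊆ S},
      ∃ a ∈ S, S.erase a = A ∧ IsAlternating (S.erase a) := by
    intro A hA
    simp only [alternatingFamily, mem_filter, mem_powersetCard] at hA
    obtain ⟨⟨⟨-, hAr⟩, hAlt⟩, hAS⟩ := hA
    obtain ⟨a, haS, rfl⟩ := (covBy_iff_card_sdiff_eq_one.2
      ⟨hAS, by rw [card_sdiff_of_subset hAS, hAr, hS]; omega⟩).exists_finset_erase
    exact ⟨a, haS, rfl, hAlt⟩
  by_contra! h3
  obtain ⟨A, hA, B, hB, C, hC, hAB, hAC, hBC⟩ := two_lt_card.1 h3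
  obtain ⟨a, ha, rfl, haAlt⟩ := hErase A hA
  obtain ⟨b, hb, rfl, hbAlt⟩ := hErase B hB
  obtain ⟨c, hc, rfl, hcAlt⟩ := hErase C hC
  exact hBC (congrArg S.erase (eq_of_isAlternating_erase ha hb hc haAlt hbAlt hcAlt
    (fun h => hAB (h ▸ rfl)) (fun h => hAC (h ▸ rfl))))

theorem card_filter_lt_image_of_strictMono {α β : Type*} [LinearOrder α] [LinearOrder β]
    {f : α → β} (hf : StrictMono f) (s : Finset α) (x : α) :
    #{z ∈ s.image f | z < f x} = #{y ∈ s | y < x} := by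
  rw [← card_image_of_injective _ hf.injective, filter_image]
  simp only [hf.lt_iff_lt]

/-- `stretch C δ` sends the `i`-th smallest element `c` of `C` (from `i = 0`) to `2 c - i + δ`. -/
def stretch (C : Finset ℕ) (δ x : ℕ) : ℕ := x + #(range x \ C) + δ

theorem strictMono_stretch (C : Finset ℕ) (δ : ℕ) : StrictMono (stretch C δ) :=
  fun x y hxy => by
    have := card_le_card (sdiff_subset_sdiff (range_subset_range.2 hxy.le) (subset_refl C))
    simp only [stretch]
    omega

theorem stretch_add_card_filter_lt (C : Finset ℕ) (δ x : ℕ) :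
    stretch C δ x + #{y ∈ C | y < x} = 2 * x + δ := by
  have h := card_sdiff_add_card_inter (range x) C
  rw [card_range, show range x ∩ C = {y ∈ C | y < x} by ext; simp [and_comm]] at h
  simp only [stretch]
  omega

theorem stretch_add_card_filter_lt_image (C : Finset ℕ) (δ x : ℕ) :
    stretch C δ x + #{z ∈ C.image (stretch C δ) | z < stretch C δ x} = 2 * x + δ := by
  rw [card_filter_lt_image_of_strictMono (strictMono_stretch C δ), stretch_add_card_filter_lt]

theorem rankParity_image_stretch (C : Finset ℕ) (δ x : ℕ) :
    rankParity (C.image (stretch C δ)) (stretch C δ x) = δ := by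
  rw [rankParity, stretch_add_card_filter_lt_image]
  push_cast
  rw [show (2 : ZMod 2) = 0 from rfl, zero_mul, zero_add]

theorem isAlternating_image_stretch (C : Finset ℕ) (δ : ℕ) :
    IsAlternating (C.image (stretch C δ)) := by
  simp only [IsAlternating, mem_image]
  rintro _ ⟨x, -, rfl⟩ _ ⟨y, -, rfl⟩
  rw [rankParity_image_stretch, rankParity_image_stretch]

theorem mem_and_eq_of_image_stretch_eq {C C' : Finset ℕ} {δ δ' : ℕ} (hδ : δ ≤ 1)
    (hδ' : δ' ≤ 1) (h : C.image (stretch C δ) = C'.image (stretch C' δ')) {x : ℕ}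
    (hx : x ∈ C) : x ∈ C' ∧ δ = δ' := by
  obtain ⟨x', hx', he⟩ := mem_image.1 (h ▸ mem_image_of_mem (stretch C δ) hx)
  have hsum := stretch_add_card_filter_lt_image C δ x
  rw [← he, h, stretch_add_card_filter_lt_image] at hsum
  obtain rfl : x' = x := by omega
  exact ⟨hx', by omega⟩

theorem image_stretch_subset_range {C : Finset ℕ} {δ m : ℕ} (hδ : δ ≤ 1)
    (hC : C ⊆ range m) :
    C.image (stretch C δ) ⊆ range (2 * m) := by
  intro z hz
  obtain ⟨x, hx, rfl⟩ := mem_image.1 hz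
  have h1 := card_le_card (sdiff_subset (s := range x) (t := C))
  have h2 := mem_range.1 (hC hx)
  simp only [card_range] at h1
  simp only [stretch, mem_range]
  omega

theorem two_mul_choose_le_card_alternatingFamily {r : ℕ} (hr : 1 ≤ r) (m : ℕ) :
    2 * m.choose r ≤ #(alternatingFamily r (2 * m)) := by
  calc 2 * m.choose r = #(range 2 ×ˢ (range m).powersetCard r) := by simp
    _ ≤ #(alternatingFamily r (2 * m)) := by
      refine card_le_card_of_injOn (fun p => p.2.image (stretch p.2 p.1)) ?_ ?_
      · rintro ⟨δ, C⟩ hp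
        simp only [coe_product, Set.mem_prod, mem_coe, mem_range, mem_powersetCard] at hp
        obtain ⟨hδ, hCm, hCr⟩ := hp
        simp only [alternatingFamily, coe_filter, mem_powersetCard, Set.mem_ofPred_eq]
        refine ⟨⟨image_stretch_subset_range (by omega) hCm, ?_⟩,
          isAlternating_image_stretch C δ⟩
        rw [card_image_of_injective _ (strictMono_stretch C δ).injective, hCr]
      · rintro ⟨δ, C⟩ hp ⟨δ', C'⟩ hp' h
        simp only [coe_product, Set.mem_prod, mem_coe, mem_range, mem_powersetCard] at hp hp' h
        obtain ⟨x, hx⟩ : C.Nonempty := card_pos.1 (by omega)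
        have hδ := (mem_and_eq_of_image_stretch_eq (by omega) (by omega) h hx).2
        have hCC' : C = C' := subset_antisymm
          (fun x hx => (mem_and_eq_of_image_stretch_eq (by omega) (by omega) h hx).1)
          (fun x hx => (mem_and_eq_of_image_stretch_eq (by omega) (by omega) h.symm hx).1)
        rw [hδ, hCC']

theorem two_mul_choose_le_exTri {r : ℕ} (hr : 1 ≤ r) (m : ℕ) :
    2 * m.choose r ≤ exTri r (2 * m) :=
  (two_mul_choose_le_card_alternatingFamily hr m).trans <|
    (triangleFree_alternatingFamily r (2 * m)).card_le_exTri_of_embedding Fin.valEmbedding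
      fun A hA x hx => ⟨⟨x, by
        simp only [alternatingFamily, mem_filter, mem_powersetCard] at hA
        exact mem_range.1 (hA.1.1 hx)⟩, rfl⟩

theorem tendsto_choose_div_choose_mul (r : ℕ) {k : ℕ} (hk : 0 < k) :
    Tendsto (fun m : ℕ => (m.choose r : ℝ) / (k * m).choose r) atTop (𝓝 ((1 / k) ^ r)) := by
  have hequiv := (isEquivalent_choose r).div
    ((isEquivalent_choose r).comp_tendsto (tendsto_id.const_mul_atTop' hk))
  refine hequiv.symm.tendsto_nhds (tendsto_const_nhds.congr' ?_)
  filter_upwards [eventually_ge_atTop 1] with m hm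
  have : (m : ℝ) ≠ 0 := by positivity
  have : (k : ℝ) ≠ 0 := by positivity
  simp only [Pi.div_apply, Function.comp_apply, id, Nat.cast_mul, mul_pow]
  field_simp
  rw [← mul_pow, one_div_mul_cancel this, one_pow]

theorem exTri_div_choose_le {r n : ℕ} (hr : 1 ≤ r) (hn : r ≤ n) :
    (exTri r n : ℝ) / n.choose r ≤ n / (r * (n + 1 - r)) := by
  have hchoose : n.choose (r - 1) * (n + 1 - r) = n.choose r * r := by
    have := Nat.choose_succ_right_eq n (r - 1)
    rw [Nat.sub_add_cancel hr] at this
    rw [this, show n + 1 - r = n - (r - 1) by omega]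
  have key : exTri r n * (r * (n + 1 - r)) ≤ n * n.choose r := by
    refine Nat.le_of_mul_le_mul_right (c := r) ?_ (by omega)
    calc exTri r n * (r * (n + 1 - r)) * r = r ^ 2 * exTri r n * (n + 1 - r) := by ring
      _ ≤ n * n.choose (r - 1) * (n + 1 - r) := Nat.mul_le_mul_right _ (sq_mul_exTri_le hr)
      _ = n * n.choose r * r := by rw [mul_assoc, hchoose, mul_assoc]
  rw [div_le_div_iff₀ (by exact_mod_cast Nat.choose_pos hn) (by
    have : (r : ℝ) ≤ n := by exact_mod_cast hn
    have : (1 : ℝ) ≤ r := by exact_mod_cast hr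
    exact mul_pos (by linarith) (by linarith))]
  have : ((n + 1 - r : ℕ) : ℝ) = n + 1 - r := by
    push_cast [Nat.cast_sub (by omega : r ≤ n + 1)]
    ring
  rw [← this]
  exact_mod_cast key

theorem one_div_two_pow_le_of_tendsto {r : ℕ} (hr : 1 ≤ r) {L : ℝ}
    (hL : Tendsto (fun n => (exTri r n : ℝ) / n.choose r) atTop (𝓝 L)) :
    1 / 2 ^ (r - 1) ≤ L := by
  have hlower := (tendsto_choose_div_choose_mul r two_pos).const_mul 2
  have hbound : ∀ m : ℕ, 2 * ((m.choose r : ℝ) / (2 * m).choose r) ≤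
      (exTri r (2 * m) : ℝ) / (2 * m).choose r := fun m => by
    rw [mul_div_assoc']
    gcongr
    exact_mod_cast two_mul_choose_le_exTri hr m
  have hle := le_of_tendsto_of_tendsto' hlower (hL.comp (tendsto_id.const_mul_atTop' two_pos))
    hbound
  calc 1 / 2 ^ (r - 1) = 2 * (1 / ((2 : ℕ) : ℝ)) ^ r := by
        rw [one_div_pow, ← Nat.sub_add_cancel hr, pow_succ]
        push_cast
        field_simp
    _ ≤ L := hle

theorem le_one_div_of_tendsto {r : ℕ} (hr : 1 ≤ r) {L : ℝ}
    (hL : Tendsto (fun n => (exTri r n : ℝ) / n.choose r) atTop (𝓝 L)) :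
    L ≤ 1 / r := by
  have hupper : Tendsto (fun n : ℕ => (n : ℝ) / (r * (n + 1 - r))) atTop (𝓝 (1 / r)) := by
    have := (tendsto_natCast_div_add_atTop (1 - r : ℝ)).const_mul (1 / r : ℝ)
    rw [mul_one] at this
    refine this.congr fun n => ?_
    rw [← div_div]
    ring
  exact le_of_tendsto_of_tendsto hL hupper
    (eventually_atTop.2 ⟨r, fun n hn => exTri_div_choose_le hr hn⟩)

/-- for every `r ≥ 2` the Turán density
`π(H(r)) = lim_{n→∞} ex(H(r),n)/C(n,r)` (the limit exists) satisfies
`1/2^(r-1) ≤ π(H(r)) ≤ 1/r`. -/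
theorem statement9 (r : ℕ) (hr : 2 ≤ r) :
    ∃ L : ℝ,
      Filter.Tendsto (fun n => (exTri r n : ℝ) / (n.choose r : ℝ)) Filter.atTop (nhds L) ∧
      1 / 2 ^ (r - 1) ≤ L ∧ L ≤ 1 / (r : ℝ) := by
  obtain ⟨L, hL⟩ := exists_tendsto_exTri_div_choose r
  have hr1 : 1 ≤ r := by omega
  exact ⟨L, hL, one_div_two_pow_le_of_tendsto hr1 hL, le_one_div_of_tendsto hr1 hL⟩
end

section
/- The Paley oriented two-graph g_3 (on 4 vertices) is special, and Aut(g_3) has order 12 and is isomorphic to PSL₂(F_3) (equivalently, to the alternating group on 4 letters). -/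
def TwoGraphIso {V₁ V₂ : Type*} (g₁ : V₁ → V₁ → V₁ → ℤ) (g₂ : V₂ → V₂ → V₂ → ℤ) : Prop :=
  ∃ φ : V₁ ≃ V₂, ∀ x y z, g₂ (φ x) (φ y) (φ z) = g₁ x y z

def restrict3 {W : Type*} (h : W → W → W → ℤ) (A : Finset W) :
    {a // a ∈ A} → {a // a ∈ A} → {a // a ∈ A} → ℤ :=
  fun x y z => h x.1 y.1 z.1

def IsSpecial {V : Type} [Fintype V] (g : V → V → V → ℤ) : Prop :=
  ∀ (W : Type) [Fintype W], ∀ h : W → W → W → ℤ,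
    IsOrientedTwoGraph h → Fintype.card W = Fintype.card V + 1 →
    {A : Finset W | A.card = Fintype.card V ∧ TwoGraphIso g (restrict3 h A)}.ncard ≤ 2

/-- The automorphism group of an oriented two-graph, as a subgroup of the symmetric
group on its vertex set. -/
def autSubgroup {V : Type*} (g : V → V → V → ℤ) : Subgroup (Equiv.Perm V) where
  carrier := {σ | ∀ x y z, g (σ x) (σ y) (σ z) = g x y z}
  one_mem' := by intro x y z; rfl
  mul_mem' := by
    intro a b ha hb x y z
    simpa [Equiv.Perm.mul_apply, hb x y z] using ha (b x) (b y) (b z)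
  inv_mem' := by
    intro a ha x y z
    simpa using (ha (a⁻¹ x) (a⁻¹ y) (a⁻¹ z)).symm

instance : Fact (Nat.Prime 3) := ⟨by norm_num⟩

/-- The Paley oriented two-graph `g₃` on the `4` vertices `F₃ ∪ {∞}`. -/
noncomputable def gThree : Option (ZMod 3) → Option (ZMod 3) → Option (ZMod 3) → ℤ :=
  gT (paleyAug (ZMod 3))

/-!
In `g₃` the two triples through an ordered pair of distinct vertices always have opposite
signs, and this property passes to every isomorphic copy. If three `4`-subsets of a
`5`-vertex oriented two-graph `h`, missing `a`, `b`, `c`, were copies of `g₃`, then for the two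
remaining vertices `v`, `w` the signs `h v w a`, `h v w b`, `h v w c` would be pairwise
opposite, so the product of the three pairwise products would be a square equal to `-1`.

Identifying `F₃ ∪ {∞}` with `Fin 4`, the automorphisms of `g₃` are exactly the even
permutations, which is checked by evaluation.
-/

theorem mul_ne_neg_one_of_mul_eq_neg_one {R : Type*} [CommRing R] [LinearOrder R]
    [IsStrictOrderedRing R] {a b c : R} (hab : a * b = -1) (hac : a * c = -1) : b * c ≠ -1 := by
  intro hbc
  have : (a * b * c) ^ 2 = -1 := by
    linear_combination (a * b) * (a * c) * hbc - (a * b) * hac + hab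
  nlinarith [sq_nonneg (a * b * c)]

theorem Finset.exists_eq_compl_singleton {W : Type*} [Fintype W] [DecidableEq W] {A : Finset W}
    (hA : A.card + 1 = Fintype.card W) : ∃ a, A = {a}ᶜ := by
  obtain ⟨a, ha⟩ := Finset.card_eq_one.1 (by rw [Finset.card_compl]; omega : Aᶜ.card = 1)
  exact ⟨a, by rw [← ha, compl_compl]⟩

theorem chi_eq_ite {F : Type*} [Field F] [Fintype F] [DecidableEq F]
    [DecidablePred (IsSquare : F → Prop)] (x : F) :
    chi x = if x = 0 then 0 else if IsSquare x then 1 else -1 := by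
  unfold chi; congr

theorem mem_autSubgroup {V : Type*} {g : V → V → V → ℤ} {σ : Equiv.Perm V} :
    σ ∈ autSubgroup g ↔ ∀ x y z, g (σ x) (σ y) (σ z) = g x y z := Iff.rfl

section ThirdVertexFlipsSign

variable {V W : Type*}

def ThirdVertexFlipsSign (g : V → V → V → ℤ) : Prop :=
  ∀ x y z w, x ≠ y → x ≠ z → x ≠ w → y ≠ z → y ≠ w → z ≠ w → g x y z * g x y w = -1

theorem ThirdVertexFlipsSign.of_twoGraphIso {g₁ : V → V → V → ℤ} {g₂ : W → W → W → ℤ}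
    (hg : ThirdVertexFlipsSign g₁) (e : TwoGraphIso g₁ g₂) : ThirdVertexFlipsSign g₂ := by
  obtain ⟨φ, hφ⟩ := e
  intro x y z w hxy hxz hxw hyz hyw hzw
  have := hg (φ.symm x) (φ.symm y) (φ.symm z) (φ.symm w) (φ.symm.injective.ne hxy)
    (φ.symm.injective.ne hxz) (φ.symm.injective.ne hxw) (φ.symm.injective.ne hyz)
    (φ.symm.injective.ne hyw) (φ.symm.injective.ne hzw)
  simpa only [← hφ, Equiv.apply_symm_apply] using this

theorem ThirdVertexFlipsSign.restrict3 {h : W → W → W → ℤ} {A : Finset W}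
    (hA : ThirdVertexFlipsSign (restrict3 h A)) {x y z w : W} (hx : x ∈ A) (hy : y ∈ A)
    (hz : z ∈ A) (hw : w ∈ A) (hxy : x ≠ y) (hxz : x ≠ z) (hxw : x ≠ w) (hyz : y ≠ z)
    (hyw : y ≠ w) (hzw : z ≠ w) : h x y z * h x y w = -1 :=
  hA ⟨x, hx⟩ ⟨y, hy⟩ ⟨z, hz⟩ ⟨w, hw⟩ (mt Subtype.ext_iff.1 hxy) (mt Subtype.ext_iff.1 hxz)
    (mt Subtype.ext_iff.1 hxw) (mt Subtype.ext_iff.1 hyz) (mt Subtype.ext_iff.1 hyw)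
    (mt Subtype.ext_iff.1 hzw)

theorem ncard_thirdVertexFlipsSign_le_two [Fintype W] (h : W → W → W → ℤ)
    (hW : Fintype.card W = 5) :
    {A : Finset W | A.card = 4 ∧ ThirdVertexFlipsSign (restrict3 h A)}.ncard ≤ 2 := by
  classical
  by_contra! hlt
  obtain ⟨A, ⟨hA, hAflip⟩, B, ⟨hB, hBflip⟩, C, ⟨hC, hCflip⟩, hAB, hAC, hBC⟩ :=
    (Set.two_lt_ncard (Set.toFinite _)).1 hlt
  obtain ⟨a, rfl⟩ := Finset.exists_eq_compl_singleton (by omega : A.card + 1 = Fintype.card W)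
  obtain ⟨b, rfl⟩ := Finset.exists_eq_compl_singleton (by omega : B.card + 1 = Fintype.card W)
  obtain ⟨c, rfl⟩ := Finset.exists_eq_compl_singleton (by omega : C.card + 1 = Fintype.card W)
  have hab : a ≠ b := by rintro rfl; exact hAB rfl
  have hac : a ≠ c := by rintro rfl; exact hAC rfl
  have hbc : b ≠ c := by rintro rfl; exact hBC rfl
  have habc : ({a, b, c} : Finset W)ᶜ.card = 2 := by
    rw [Finset.card_compl, hW, Finset.card_insert_of_notMem (by simp [hab, hac]),
      Finset.card_pair hbc]
  obtain ⟨v, w, hvw, hvw'⟩ := Finset.card_eq_two.1 habc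
  have hv : v ∉ ({a, b, c} : Finset W) := Finset.mem_compl.1 (by simp [hvw'])
  have hw : w ∉ ({a, b, c} : Finset W) := Finset.mem_compl.1 (by simp [hvw'])
  simp only [Finset.mem_insert, Finset.mem_singleton, not_or] at hv hw
  obtain ⟨hva, hvb, hvc⟩ := hv
  obtain ⟨hwa, hwb, hwc⟩ := hw
  have hvwab := hCflip.restrict3 (by simpa) (by simpa) (by simpa) (by simpa)
    hvw hva hvb hwa hwb hab
  have hvwac := hBflip.restrict3 (by simpa) (by simpa) (by simpa) (by simpa [eq_comm])
    hvw hva hvc hwa hwc hac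
  have hvwbc := hAflip.restrict3 (by simpa) (by simpa) (by simpa [eq_comm]) (by simpa [eq_comm])
    hvw hvb hvc hwb hwc hbc
  exact mul_ne_neg_one_of_mul_eq_neg_one hvwab hvwac hvwbc

end ThirdVertexFlipsSign

/-- `paleyAug (ZMod 3)` with decidable `if`s in place of the classical ones in `chi`, so that
the kernel can evaluate `gThree`. -/
def paleyAugZMod3 : Option (ZMod 3) → Option (ZMod 3) → ℤ
  | some a, some b => if b - a = 0 then 0 else if IsSquare (b - a) then 1 else -1
  | some _, none => 1
  | none, some _ => -1
  | none, none => 0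

theorem gThree_eq : gThree = gT paleyAugZMod3 := by
  have : paleyAug (ZMod 3) = paleyAugZMod3 := by
    funext a b
    cases a <;> cases b <;> simp only [paleyAug, paleyAugZMod3, chi_eq_ite]
  rw [gThree, this]

theorem thirdVertexFlipsSign_gThree : ThirdVertexFlipsSign gThree := by
  rw [gThree_eq]
  unfold ThirdVertexFlipsSign
  decide

def optionZMod3EquivFin4 : Option (ZMod 3) ≃ Fin 4 := (finSuccEquiv 3).symm

theorem map_autSubgroup_gThree :
    (autSubgroup gThree).map (optionZMod3EquivFin4.permCongrHom : _ →* Equiv.Perm (Fin 4)) =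
      alternatingGroup (Fin 4) := by
  ext σ
  rw [Subgroup.map_equiv_eq_comap_symm, Subgroup.mem_comap, mem_autSubgroup,
    Equiv.Perm.mem_alternatingGroup, gThree_eq]
  revert σ
  decide

theorem isSpecial_gThree : IsSpecial gThree := by
  intro W _ h _ hW
  refine (Set.ncard_le_ncard ?_ (Set.toFinite _)).trans
    (ncard_thirdVertexFlipsSign_le_two h (by simpa using hW))
  rintro A ⟨hA, e⟩
  exact ⟨by simpa using hA, thirdVertexFlipsSign_gThree.of_twoGraphIso e⟩

/-- the Paley oriented two-graph `g₃` (on 4 vertices) is special, and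
`Aut(g₃)` has order `12` and is isomorphic to the alternating group on 4 letters
(equivalently, to `PSL₂(F₃)`). -/
theorem statement11 :
    IsSpecial gThree ∧
    Nat.card (autSubgroup gThree) = 12 ∧
    Nonempty (autSubgroup gThree ≃* alternatingGroup (Fin 4)) := by
  have iso : autSubgroup gThree ≃* alternatingGroup (Fin 4) :=
    (optionZMod3EquivFin4.permCongrHom.subgroupMap _).trans
      (MulEquiv.subgroupCongr map_autSubgroup_gThree)
  refine ⟨isSpecial_gThree, ?_, ⟨iso⟩⟩
  rw [Nat.card_congr iso.toEquiv, nat_card_alternatingGroup]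
  simp [Nat.factorial]
end
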